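/- arXiv:0709.0113 — 3 statements merged into one kernel-verified Lean document; each statement's English description precedes it below -/
import Mathlib

section
/- Anonymity: if σ and σ' are sequences of equal length n, and there exist indices i, j with σ_i = σ'_j, σ_j = σ'_i, and σ_k = σ'_k for all k ≠ i, j (i.e., σ' is obtained from σ by swapping two entries), then σ ≈ σ'. -/
/-- Equivalence `≈` derived from the weak preorder `⪯`. -/
def eqv {X : Type*} (le : List X → List X → Prop) (σ τ : List X) : Prop :=
  le σ τ ∧ le τ σ

/-- Strict part `≺` of the weak preorder `⪯`. -/
def slt {X : Type*} (le : List X → List X → Prop) (σ τ : List X) : Prop :=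
  le σ τ ∧ ¬ le τ σ

/-- n-fold repetition `σ^n` of a sequence. -/
def rep {X : Type*} (σ : List X) (n : ℕ) : List X :=
  (List.replicate n σ).flatten

/-! Since `≈` is a congruence for concatenation that identifies `σ ∘ σ'` with `σ' ∘ σ`, it
identifies any two nonempty sequences that are permutations of each other; a sequence with two
entries swapped is such a permutation. -/

namespace eqv

variable {X : Type*} {le : List X → List X → Prop}

theorem trans
    (htrans : ∀ σ τ ρ : List X, σ ≠ [] → τ ≠ [] → ρ ≠ [] → le σ τ → le τ ρ → le σ ρ)
    {a b c : List X} (ha : a ≠ []) (hb : b ≠ []) (hc : c ≠ [])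
    (hab : eqv le a b) (hbc : eqv le b c) : eqv le a c :=
  ⟨htrans a b c ha hb hc hab.1 hbc.1, htrans c b a hc hb ha hbc.2 hab.2⟩

theorem append_right
    (htrans : ∀ σ τ ρ : List X, σ ≠ [] → τ ≠ [] → ρ ≠ [] → le σ τ → le τ ρ → le σ ρ)
    (ax23 : ∀ σ σ' σ'' : List X, σ ≠ [] → σ' ≠ [] → σ'' ≠ [] →
      eqv le σ' σ'' → eqv le (σ ++ σ') (σ ++ σ''))
    (ax3 : ∀ σ σ' : List X, σ ≠ [] → σ' ≠ [] → eqv le (σ ++ σ') (σ' ++ σ))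
    {a b c : List X} (ha : a ≠ []) (hb : b ≠ []) (hc : c ≠ [])
    (hab : eqv le a b) : eqv le (a ++ c) (b ++ c) :=
  -- a ++ c ≈ c ++ a ≈ c ++ b ≈ b ++ c
  have hca : c ++ a ≠ [] := by simp [hc]
  have hcb : c ++ b ≠ [] := by simp [hc]
  ((ax3 a c ha hc).trans htrans (by simp [ha]) hca hcb (ax23 c a b hc ha hb hab)).trans htrans
    (by simp [ha]) hcb (by simp [hb]) (ax3 c b hc hb)

theorem of_perm
    (hrefl : ∀ σ : List X, σ ≠ [] → le σ σ)
    (htrans : ∀ σ τ ρ : List X, σ ≠ [] → τ ≠ [] → ρ ≠ [] → le σ τ → le τ ρ → le σ ρ)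
    (ax23 : ∀ σ σ' σ'' : List X, σ ≠ [] → σ' ≠ [] → σ'' ≠ [] →
      eqv le σ' σ'' → eqv le (σ ++ σ') (σ ++ σ''))
    (ax3 : ∀ σ σ' : List X, σ ≠ [] → σ' ≠ [] → eqv le (σ ++ σ') (σ' ++ σ))
    {a b : List X} (ha : a ≠ []) (hab : a.Perm b) : eqv le a b := by
  induction hab with
  | nil => exact absurd rfl ha
  | @cons x l l' hll' ih =>
    rcases eq_or_ne l [] with rfl | hl
    · rw [hll'.nil_eq.symm]
      exact ⟨hrefl [x] (List.cons_ne_nil _ _), hrefl [x] (List.cons_ne_nil _ _)⟩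
    · exact ax23 [x] l l' (List.cons_ne_nil _ _) hl (fun h => hl (h ▸ hll').eq_nil) (ih hl)
  | swap x y l =>
    have hyx : eqv le [y, x] [x, y] := ax3 [y] [x] (List.cons_ne_nil _ _) (List.cons_ne_nil _ _)
    rcases eq_or_ne l [] with rfl | hl
    · exact hyx
    · exact append_right htrans ax23 ax3 (List.cons_ne_nil _ _) (List.cons_ne_nil _ _) hl hyx
  | @trans l₁ l₂ l₃ h₁₂ h₂₃ ih₁₂ ih₂₃ =>
    have hl₂ : l₂ ≠ [] := fun h => ha (h ▸ h₁₂).eq_nil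
    have hl₃ : l₃ ≠ [] := fun h => hl₂ (h ▸ h₂₃).eq_nil
    exact (ih₁₂ ha).trans htrans ha hl₂ hl₃ (ih₂₃ hl₂)

end eqv

theorem List.perm_of_get_eq_get_perm {α : Type*} {l l' : List α} (hlen : l.length = l'.length)
    (e : Equiv.Perm (Fin l.length)) (h : ∀ k, l'.get (Fin.cast hlen k) = l.get (e k)) :
    l.Perm l' := by
  have hl' : l' = List.ofFn (l.get ∘ e) :=
    List.ext_get (by simp [← hlen]) fun k _ hk => by
      simpa using h ⟨k, by simpa using hk⟩
  rw [hl']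
  exact ((e.ofFn_comp_perm l.get).trans (by rw [List.ofFn_get])).symm

theorem stmt2_general {X : Type*}
    (le : List X → List X → Prop)
    (hrefl : ∀ σ : List X, σ ≠ [] → le σ σ)
    (htrans : ∀ σ τ ρ : List X, σ ≠ [] → τ ≠ [] → ρ ≠ [] → le σ τ → le τ ρ → le σ ρ)
    (ax23 : ∀ σ σ' σ'' : List X, σ ≠ [] → σ' ≠ [] → σ'' ≠ [] → eqv le σ' σ'' → eqv le (σ ++ σ') (σ ++ σ''))
    (ax3 : ∀ σ σ' : List X, σ ≠ [] → σ' ≠ [] → eqv le (σ ++ σ') (σ' ++ σ))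
    (σ σ' : List X) (hσ : σ ≠ [])
    (hlen : σ.length = σ'.length)
    (i j : ℕ) (hi : i < σ.length) (hj : j < σ.length)
    (h1 : σ.get ⟨i, hi⟩ = σ'.get ⟨j, hlen ▸ hj⟩)
    (h2 : σ.get ⟨j, hj⟩ = σ'.get ⟨i, hlen ▸ hi⟩)
    (h3 : ∀ k (hk : k < σ.length), k ≠ i → k ≠ j → σ.get ⟨k, hk⟩ = σ'.get ⟨k, hlen ▸ hk⟩) :
    eqv le σ σ' := by
  refine eqv.of_perm hrefl htrans ax23 ax3 hσ
    (List.perm_of_get_eq_get_perm hlen (Equiv.swap ⟨i, hi⟩ ⟨j, hj⟩) fun ⟨k, hk⟩ => ?_)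
  by_cases hki : k = i
  · subst hki
    exact h2.symm.trans (congrArg σ.get (Equiv.swap_apply_left _ _).symm)
  by_cases hkj : k = j
  · subst hkj
    exact h1.symm.trans (congrArg σ.get (Equiv.swap_apply_right _ _).symm)
  · rw [Equiv.swap_apply_of_ne_of_ne (Fin.ne_of_val_ne hki) (Fin.ne_of_val_ne hkj)]
    exact (h3 k hk hki hkj).symm

theorem stmt2 {X : Type*}
    (le : List X → List X → Prop)
    (hrefl : ∀ σ : List X, σ ≠ [] → le σ σ)
    (htrans : ∀ σ τ ρ : List X, σ ≠ [] → τ ≠ [] → ρ ≠ [] → le σ τ → le τ ρ → le σ ρ)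
    (htotal : ∀ σ τ : List X, σ ≠ [] → τ ≠ [] → le σ τ ∨ le τ σ)
    (ax23 : ∀ σ σ' σ'' : List X, σ ≠ [] → σ' ≠ [] → σ'' ≠ [] → eqv le σ' σ'' → eqv le (σ ++ σ') (σ ++ σ''))
    (ax3 : ∀ σ σ' : List X, σ ≠ [] → σ' ≠ [] → eqv le (σ ++ σ') (σ' ++ σ))
    (σ σ' : List X) (hσ : σ ≠ []) (hσ' : σ' ≠ [])
    (hlen : σ.length = σ'.length)
    (i j : ℕ) (hi : i < σ.length) (hj : j < σ.length)
    (h1 : σ.get ⟨i, hi⟩ = σ'.get ⟨j, hlen ▸ hj⟩)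
    (h2 : σ.get ⟨j, hj⟩ = σ'.get ⟨i, hlen ▸ hi⟩)
    (h3 : ∀ k (hk : k < σ.length), k ≠ i → k ≠ j → σ.get ⟨k, hk⟩ = σ'.get ⟨k, hlen ▸ hk⟩) :
    eqv le σ σ' :=
  stmt2_general le hrefl htrans ax23 ax3 σ σ' hσ hlen i j hi hj h1 h2 h3
end

section
/- Weak Pareto (weak version): if σ and σ' have equal length and σ_i ≤ σ'_i for every index i (pointwise domination), then σ ⪯ σ'. -/
section PreferenceOnSequences

variable {X : Type*} (le : List X → List X → Prop)

theorem le_singleton_of_le [LinearOrder X]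
    (hrefl : ∀ σ : List X, σ ≠ [] → le σ σ)
    (ax11 : ∀ x x' : X, x < x' → slt le [x] [x'])
    {x x' : X} (h : x ≤ x') : le [x] [x'] := by
  rcases h.lt_or_eq with h | rfl
  · exact (ax11 x x' h).1
  · exact hrefl [x] (List.cons_ne_nil x [])

theorem le_append_left
    (ax22 : ∀ σ σ' σ'' : List X, σ ≠ [] → σ' ≠ [] → σ'' ≠ [] →
      slt le σ' σ'' → slt le (σ ++ σ') (σ ++ σ''))
    (ax23 : ∀ σ σ' σ'' : List X, σ ≠ [] → σ' ≠ [] → σ'' ≠ [] →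
      eqv le σ' σ'' → eqv le (σ ++ σ') (σ ++ σ''))
    {a b c : List X} (ha : a ≠ []) (hb : b ≠ []) (hc : c ≠ []) (h : le b c) :
    le (a ++ b) (a ++ c) := by
  by_cases h' : le c b
  · exact (ax23 a b c ha hb hc ⟨h, h'⟩).1
  · exact (ax22 a b c ha hb hc ⟨h, h'⟩).1

theorem le_append_right
    (htrans : ∀ σ τ ρ : List X, σ ≠ [] → τ ≠ [] → ρ ≠ [] → le σ τ → le τ ρ → le σ ρ)
    (ax22 : ∀ σ σ' σ'' : List X, σ ≠ [] → σ' ≠ [] → σ'' ≠ [] →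
      slt le σ' σ'' → slt le (σ ++ σ') (σ ++ σ''))
    (ax23 : ∀ σ σ' σ'' : List X, σ ≠ [] → σ' ≠ [] → σ'' ≠ [] →
      eqv le σ' σ'' → eqv le (σ ++ σ') (σ ++ σ''))
    (ax3 : ∀ σ σ' : List X, σ ≠ [] → σ' ≠ [] → eqv le (σ ++ σ') (σ' ++ σ))
    {a b c : List X} (ha : a ≠ []) (hb : b ≠ []) (hc : c ≠ []) (h : le b c) :
    le (b ++ a) (c ++ a) := by
  have hba : b ++ a ≠ [] := List.append_ne_nil_of_left_ne_nil hb a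
  have hab : a ++ b ≠ [] := List.append_ne_nil_of_left_ne_nil ha b
  have hac : a ++ c ≠ [] := List.append_ne_nil_of_left_ne_nil ha c
  have hca : c ++ a ≠ [] := List.append_ne_nil_of_left_ne_nil hc a
  have hswap_b : le (b ++ a) (a ++ b) := (ax3 b a hb ha).1
  have hswap_c : le (a ++ c) (c ++ a) := (ax3 a c ha hc).1
  have hmono : le (a ++ b) (a ++ c) := le_append_left le ax22 ax23 ha hb hc h
  exact htrans _ _ _ hba hac hca (htrans _ _ _ hba hab hac hswap_b hmono) hswap_c

theorem le_of_forall₂_le [LinearOrder X]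
    (hrefl : ∀ σ : List X, σ ≠ [] → le σ σ)
    (htrans : ∀ σ τ ρ : List X, σ ≠ [] → τ ≠ [] → ρ ≠ [] → le σ τ → le τ ρ → le σ ρ)
    (ax11 : ∀ x x' : X, x < x' → slt le [x] [x'])
    (ax22 : ∀ σ σ' σ'' : List X, σ ≠ [] → σ' ≠ [] → σ'' ≠ [] →
      slt le σ' σ'' → slt le (σ ++ σ') (σ ++ σ''))
    (ax23 : ∀ σ σ' σ'' : List X, σ ≠ [] → σ' ≠ [] → σ'' ≠ [] →
      eqv le σ' σ'' → eqv le (σ ++ σ') (σ ++ σ''))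
    (ax3 : ∀ σ σ' : List X, σ ≠ [] → σ' ≠ [] → eqv le (σ ++ σ') (σ' ++ σ))
    {σ σ' : List X} (hσ : σ ≠ []) (hdom : List.Forall₂ (· ≤ ·) σ σ') : le σ σ' := by
  induction hdom with
  | nil => exact absurd rfl hσ
  | @cons x x' τ τ' hx hτ ih =>
    have hhead : le [x] [x'] := le_singleton_of_le le hrefl ax11 hx
    rcases eq_or_ne τ [] with rfl | hτ_ne
    · rwa [List.forall₂_nil_left_iff.mp hτ]
    have hτ'_ne : τ' ≠ [] := by
      rintro rfl
      exact hτ_ne (List.forall₂_nil_right_iff.mp hτ)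
    have hstep_head : le ([x] ++ τ) ([x'] ++ τ) :=
      le_append_right le htrans ax22 ax23 ax3 hτ_ne (List.cons_ne_nil x []) (List.cons_ne_nil x' [])
        hhead
    have hstep_tail : le ([x'] ++ τ) ([x'] ++ τ') :=
      le_append_left le ax22 ax23 (List.cons_ne_nil x' []) hτ_ne hτ'_ne (ih hτ_ne)
    exact htrans _ _ _ (List.cons_ne_nil x τ) (List.cons_ne_nil x' τ) (List.cons_ne_nil x' τ')
      hstep_head hstep_tail

end PreferenceOnSequences

theorem stmt4_general {X : Type*} [LinearOrder X]
    (le : List X → List X → Prop)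
    (hrefl : ∀ σ : List X, σ ≠ [] → le σ σ)
    (htrans : ∀ σ τ ρ : List X, σ ≠ [] → τ ≠ [] → ρ ≠ [] → le σ τ → le τ ρ → le σ ρ)
    (ax11 : ∀ x x' : X, x < x' → slt le [x] [x'])
    (ax22 : ∀ σ σ' σ'' : List X, σ ≠ [] → σ' ≠ [] → σ'' ≠ [] → slt le σ' σ'' → slt le (σ ++ σ') (σ ++ σ''))
    (ax23 : ∀ σ σ' σ'' : List X, σ ≠ [] → σ' ≠ [] → σ'' ≠ [] → eqv le σ' σ'' → eqv le (σ ++ σ') (σ ++ σ''))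
    (ax3 : ∀ σ σ' : List X, σ ≠ [] → σ' ≠ [] → eqv le (σ ++ σ') (σ' ++ σ))
    (σ σ' : List X) (hσ : σ ≠ [])
    (hlen : σ.length = σ'.length)
    (hdom : ∀ k (hk : k < σ.length), σ.get ⟨k, hk⟩ ≤ σ'.get ⟨k, hlen ▸ hk⟩) :
    le σ σ' :=
  le_of_forall₂_le le hrefl htrans ax11 ax22 ax23 ax3 hσ
    (List.forall₂_iff_get.mpr ⟨hlen, fun k hk _ => hdom k hk⟩)

theorem stmt4 {X : Type*} [LinearOrder X]
    (le : List X → List X → Prop)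
    (hrefl : ∀ σ : List X, σ ≠ [] → le σ σ)
    (htrans : ∀ σ τ ρ : List X, σ ≠ [] → τ ≠ [] → ρ ≠ [] → le σ τ → le τ ρ → le σ ρ)
    (htotal : ∀ σ τ : List X, σ ≠ [] → τ ≠ [] → le σ τ ∨ le τ σ)
    (ax11 : ∀ x x' : X, x < x' → slt le [x] [x'])
    (ax12 : ∀ x x' : X, x = x' → eqv le [x] [x'])
    (ax21 : ∀ σ : List X, σ ≠ [] → eqv le (σ ++ σ) σ)
    (ax22 : ∀ σ σ' σ'' : List X, σ ≠ [] → σ' ≠ [] → σ'' ≠ [] → slt le σ' σ'' → slt le (σ ++ σ') (σ ++ σ''))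
    (ax23 : ∀ σ σ' σ'' : List X, σ ≠ [] → σ' ≠ [] → σ'' ≠ [] → eqv le σ' σ'' → eqv le (σ ++ σ') (σ ++ σ''))
    (ax3 : ∀ σ σ' : List X, σ ≠ [] → σ' ≠ [] → eqv le (σ ++ σ') (σ' ++ σ))
    (σ σ' : List X) (hσ : σ ≠ []) (hσ' : σ' ≠ [])
    (hlen : σ.length = σ'.length)
    (hdom : ∀ k (hk : k < σ.length), σ.get ⟨k, hk⟩ ≤ σ'.get ⟨k, hlen ▸ hk⟩) :
    le σ σ' :=
  stmt4_general le hrefl htrans ax11 ax22 ax23 ax3 σ σ' hσ hlen hdom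
end

section
/- Determination by equal-length comparisons: for nonempty sequences σ of length m ≥ 1 and σ' of length n ≥ 1, σ ⪯ σ' holds if and only if σ^n ⪯ σ'^m (a comparison of two sequences of equal length mn). In particular, the restriction of ⪯ to pairs of equal-length sequences determines ⪯ on all of Σ. -/
/-! By (2.1) and (2.3), induction on `k` gives `σ^k ≈ σ` for every `k ≥ 1`. Since `⪯` is
transitive, it is invariant under replacing either side by an `≈`-equivalent sequence, so
`σ ⪯ σ'` iff `σ^n ⪯ σ'^m`. -/

section Repetition

variable {X : Type*}

lemma rep_succ (σ : List X) (n : ℕ) : rep σ (n + 1) = σ ++ rep σ n := by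
  simp [rep, List.replicate_succ]

lemma rep_ne_nil {σ : List X} (hσ : σ ≠ []) {n : ℕ} (hn : n ≠ 0) : rep σ n ≠ [] := by
  simp [rep, hσ, hn]

end Repetition

section Preorder

variable {X : Type*} (le : List X → List X → Prop)

lemma eqv_trans
    (htrans : ∀ σ τ ρ : List X, σ ≠ [] → τ ≠ [] → ρ ≠ [] → le σ τ → le τ ρ → le σ ρ)
    {σ τ ρ : List X} (hσ : σ ≠ []) (hτ : τ ≠ []) (hρ : ρ ≠ [])
    (h₁ : eqv le σ τ) (h₂ : eqv le τ ρ) : eqv le σ ρ :=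
  ⟨htrans σ τ ρ hσ hτ hρ h₁.1 h₂.1, htrans ρ τ σ hρ hτ hσ h₂.2 h₁.2⟩

lemma le_iff_le_of_eqv
    (htrans : ∀ σ τ ρ : List X, σ ≠ [] → τ ≠ [] → ρ ≠ [] → le σ τ → le τ ρ → le σ ρ)
    {σ σ' τ τ' : List X} (hσ : σ ≠ []) (hσ' : σ' ≠ []) (hτ : τ ≠ []) (hτ' : τ' ≠ [])
    (hσσ' : eqv le σ σ') (hττ' : eqv le τ τ') : le σ τ ↔ le σ' τ' :=
  ⟨fun h => htrans σ' τ τ' hσ' hτ hτ' (htrans σ' σ τ hσ' hσ hτ hσσ'.2 h) hττ'.1,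
   fun h => htrans σ τ' τ hσ hτ' hτ (htrans σ σ' τ' hσ hσ' hτ' hσσ'.1 h) hττ'.2⟩

lemma rep_eqv_self
    (hrefl : ∀ σ : List X, σ ≠ [] → le σ σ)
    (htrans : ∀ σ τ ρ : List X, σ ≠ [] → τ ≠ [] → ρ ≠ [] → le σ τ → le τ ρ → le σ ρ)
    (ax21 : ∀ σ : List X, σ ≠ [] → eqv le (σ ++ σ) σ)
    (ax23 : ∀ σ σ' σ'' : List X, σ ≠ [] → σ' ≠ [] → σ'' ≠ [] → eqv le σ' σ'' →
      eqv le (σ ++ σ') (σ ++ σ''))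
    {σ : List X} (hσ : σ ≠ []) {n : ℕ} (hn : n ≠ 0) : eqv le (rep σ n) σ := by
  induction n with
  | zero => exact absurd rfl hn
  | succ k ih =>
    rcases Nat.eq_zero_or_pos k with rfl | hk
    · rw [show rep σ 1 = σ by simp [rep]]
      exact ⟨hrefl σ hσ, hrefl σ hσ⟩
    have hσσ : σ ++ σ ≠ [] := by simp [hσ]
    rw [rep_succ]
    exact eqv_trans le htrans (by simp [hσ]) hσσ hσ
      (ax23 σ _ σ hσ (rep_ne_nil hσ hk.ne') hσ (ih hk.ne')) (ax21 σ hσ)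

end Preorder

theorem stmt8_general {X : Type*}
    (le : List X → List X → Prop)
    (hrefl : ∀ σ : List X, σ ≠ [] → le σ σ)
    (htrans : ∀ σ τ ρ : List X, σ ≠ [] → τ ≠ [] → ρ ≠ [] → le σ τ → le τ ρ → le σ ρ)
    (ax21 : ∀ σ : List X, σ ≠ [] → eqv le (σ ++ σ) σ)
    (ax23 : ∀ σ σ' σ'' : List X, σ ≠ [] → σ' ≠ [] → σ'' ≠ [] → eqv le σ' σ'' → eqv le (σ ++ σ') (σ ++ σ''))
    (σ σ' : List X) (hσ : σ ≠ []) (hσ' : σ' ≠ []) :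
    le σ σ' ↔ le (rep σ σ'.length) (rep σ' σ.length) := by
  have hm : σ.length ≠ 0 := by simpa using hσ
  have hn : σ'.length ≠ 0 := by simpa using hσ'
  exact le_iff_le_of_eqv le htrans hσ (rep_ne_nil hσ hn) hσ' (rep_ne_nil hσ' hm)
    (rep_eqv_self le hrefl htrans ax21 ax23 hσ hn).symm
    (rep_eqv_self le hrefl htrans ax21 ax23 hσ' hm).symm

theorem stmt8 {X : Type*}
    (le : List X → List X → Prop)
    (hrefl : ∀ σ : List X, σ ≠ [] → le σ σ)
    (htrans : ∀ σ τ ρ : List X, σ ≠ [] → τ ≠ [] → ρ ≠ [] → le σ τ → le τ ρ → le σ ρ)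
    (htotal : ∀ σ τ : List X, σ ≠ [] → τ ≠ [] → le σ τ ∨ le τ σ)
    (ax21 : ∀ σ : List X, σ ≠ [] → eqv le (σ ++ σ) σ)
    (ax22 : ∀ σ σ' σ'' : List X, σ ≠ [] → σ' ≠ [] → σ'' ≠ [] → slt le σ' σ'' → slt le (σ ++ σ') (σ ++ σ''))
    (ax23 : ∀ σ σ' σ'' : List X, σ ≠ [] → σ' ≠ [] → σ'' ≠ [] → eqv le σ' σ'' → eqv le (σ ++ σ') (σ ++ σ''))
    (ax3 : ∀ σ σ' : List X, σ ≠ [] → σ' ≠ [] → eqv le (σ ++ σ') (σ' ++ σ))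
    (σ σ' : List X) (hσ : σ ≠ []) (hσ' : σ' ≠ []) :
    le σ σ' ↔ le (rep σ σ'.length) (rep σ' σ.length) :=
  stmt8_general le hrefl htrans ax21 ax23 σ σ' hσ hσ'
end
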